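/- arXiv:2209.09137 — 2 statements merged into one kernel-verified Lean document; each statement's English description precedes it below -/
import Mathlib

section
/- Set λ_m := min(μ_m, μ_m²), so λ_m → ∞, and set r := max(p, q, 2), K′(φ,ψ) := 1 + ‖φ‖_U^r + ‖ψ‖_U^r and K̃₂′(φ,ψ) := K′(φ,ψ) + ‖φ‖_H² + ‖ψ‖_H². Then there exists a function c′_· : [0,∞) → [0,∞), bounded on [0,T] for every T > 0 and depending only on the data of the context (the embedding constant c₀, κ, p, q and the function c_·), such that for all natural numbers m < n, all s ≥ 0, all φ ∈ V_n and all ψ ∈ V_m: 2⟨𝒫_n𝒜(s,φ) − 𝒫_m𝒜(s,ψ), φ − ψ⟩_U + Σ_{i=1}^∞ ‖𝒫_n𝒢_i(s,φ) − 𝒫_m𝒢_i(s,ψ)‖_U² ≤ c′_s · K̃₂′(φ,ψ) · ‖φ − ψ‖_U² − (κ/2)‖φ − ψ‖_H² + (c′_s/λ_m) · K′(φ,ψ) · [1 + ‖φ‖_V² + ‖ψ‖_V²]. (This is the first inequality of Lemma 3.11 of the paper.) -/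
/-! Since `φ - ψ ∈ V_n` and `ψ ∈ V_m ⊆ V_n`, projecting the drift changes
`⟨𝒜φ - 𝒜ψ, φ - ψ⟩` only by `⟨𝒜ψ, (I - 𝒫_m)φ⟩`, and projecting the noise raises
`‖𝒢ᵢφ - 𝒢ᵢψ‖²` at most by `‖(I - 𝒫_m)(𝒢ᵢφ - 𝒢ᵢψ)‖² + 2‖(I - 𝒫_m)𝒢ᵢψ‖²`.
The approximation property bounds these errors by `μ_m⁻¹` resp. `μ_m⁻²` times `H`-norms,
which the growth bound (i) controls by `K′(φ,ψ)(1 + ‖φ‖_V² + ‖ψ‖_V²)`; the unprojected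
terms are estimated by the monotonicity (ii), with `K̃₂ ≤ 3 K̃₂′` since `t^p, t^q ≤ 1 + t^r`. -/

open scoped RealInnerProductSpace
open Filter

/-- The orthogonal projection (in `U`) onto `span {b 0, …, b (n-1)}`, regarded as a map
`U → U`. -/
noncomputable def projIio {U : Type*} [NormedAddCommGroup U] [InnerProductSpace ℝ U]
    [CompleteSpace U] (b : ℕ → U) (n : ℕ) : U → U := fun x =>
  haveI : FiniteDimensional ℝ (Submodule.span ℝ (b '' Set.Iio n)) :=
    FiniteDimensional.span_of_finite ℝ ((Set.finite_Iio n).image b)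
  ((Submodule.orthogonalProjectionOnto (Submodule.span ℝ (b '' Set.Iio n)) x : U))

instance finiteDimensional_span_image_Iio {U : Type*} [NormedAddCommGroup U]
    [InnerProductSpace ℝ U] (b : ℕ → U) (n : ℕ) :
    FiniteDimensional ℝ (Submodule.span ℝ (b '' Set.Iio n)) :=
  FiniteDimensional.span_of_finite ℝ ((Set.finite_Iio n).image b)

theorem projIio_eq_starProjection {U : Type*} [NormedAddCommGroup U] [InnerProductSpace ℝ U]
    [CompleteSpace U] (b : ℕ → U) (n : ℕ) (x : U) :
    projIio b n x = (Submodule.span ℝ (b '' Set.Iio n)).starProjection x :=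
  rfl

theorem apply_mem_span_image_of_mem_span_image {ι V U : Type*} [AddCommGroup V] [Module ℝ V]
    [AddCommGroup U] [Module ℝ U] (f : V →ₗ[ℝ] U) {a : ι → V} {s : Set ι} {x : V}
    (hx : x ∈ Submodule.span ℝ (a '' s)) :
    f x ∈ Submodule.span ℝ ((fun k => f (a k)) '' s) := by
  simpa only [Set.image_image] using Submodule.apply_mem_span_image_of_mem_span f hx

theorem norm_sub_sq_le_two_mul {E : Type*} [SeminormedAddCommGroup E] (x y : E) :
    ‖x - y‖ ^ 2 ≤ 2 * (‖x‖ ^ 2 + ‖y‖ ^ 2) :=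
  (pow_le_pow_left₀ (norm_nonneg _) (norm_sub_le x y) 2).trans add_sq_le

theorem Real.rpow_le_one_add_rpow {t e r : ℝ} (ht : 0 ≤ t) (he : 0 ≤ e) (her : e ≤ r) :
    t ^ e ≤ 1 + t ^ r := by
  rcases le_total t 1 with h | h
  · linarith [Real.rpow_le_one ht h he, Real.rpow_nonneg ht r]
  · linarith [Real.rpow_le_rpow_of_exponent_le h her]

theorem one_div_le_inv_min_sq {μ : ℝ} (hμ : 0 ≤ μ) :
    1 / μ ≤ (min μ (μ ^ 2))⁻¹ ∧ (1 / μ) ^ 2 ≤ (min μ (μ ^ 2))⁻¹ := by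
  rcases hμ.eq_or_lt with rfl | hμ
  · simp
  have hmin : 0 < min μ (μ ^ 2) := lt_min hμ (by positivity)
  rw [one_div, inv_pow]
  exact ⟨inv_anti₀ hmin (min_le_left _ _), inv_anti₀ hmin (min_le_right _ _)⟩

theorem nonneg_of_norm_le_mul {H U : Type*} [NormedAddCommGroup H] [Nontrivial H]
    [NormedAddCommGroup U] (f : H → U) {ε : ℝ} (hf : ∀ h, ‖f h‖ ≤ ε * ‖h‖) : 0 ≤ ε := by
  obtain ⟨h, hh⟩ := exists_ne (0 : H)
  exact nonneg_of_mul_nonneg_left ((norm_nonneg _).trans (hf h)) (norm_pos_iff.mpr hh)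

section NestedProjections

variable {U : Type*} [NormedAddCommGroup U] [InnerProductSpace ℝ U]
  {K L : Submodule ℝ U} [K.HasOrthogonalProjection] [L.HasOrthogonalProjection]

theorem inner_starProjection_sub_starProjection (hKL : K ≤ L) {x y : U} (hx : x ∈ L)
    (hy : y ∈ K) (w z : U) :
    ⟪L.starProjection w - K.starProjection z, x - y⟫
      = ⟪w - z, x - y⟫ + ⟪z, x - K.starProjection x⟫ := by
  have hL : L.starProjection (x - y) = x - y :=
    Submodule.starProjection_eq_self_iff.mpr (L.sub_mem hx (hKL hy))
  have hK : K.starProjection y = y := Submodule.starProjection_eq_self_iff.mpr hy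
  rw [inner_sub_left, Submodule.inner_starProjection_left_eq_right,
    Submodule.inner_starProjection_left_eq_right, hL, map_sub, hK]
  simp only [inner_sub_left, inner_sub_right]
  ring

theorem norm_starProjection_sub_starProjection_sq_le (hKL : K ≤ L) (u v : U) :
    ‖L.starProjection u - K.starProjection v‖ ^ 2
      ≤ ‖u - v‖ ^ 2 + ‖(u - v) - K.starProjection (u - v)‖ ^ 2
        + 2 * ‖v - K.starProjection v‖ ^ 2 := by
  set w := v - K.starProjection v
  -- `w ⊥ K`, so only the part of `u - v` orthogonal to `K` pairs with it
  have hw : ⟪u - v, w⟫ = ⟪(u - v) - K.starProjection (u - v), w⟫ := by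
    have h0 : ⟪K.starProjection (u - v), w⟫ = 0 := by
      rw [real_inner_comm]
      exact K.starProjection_inner_eq_zero _ _ (K.starProjection_apply_mem _)
    rw [inner_sub_left (u - v), h0, sub_zero]
  have hLK : L.starProjection u - K.starProjection v
      = L.starProjection (u - K.starProjection v) := by
    rw [map_sub, Submodule.starProjection_eq_self_iff.mpr (hKL (K.starProjection_apply_mem v))]
  calc ‖L.starProjection u - K.starProjection v‖ ^ 2
      ≤ ‖(u - v) + w‖ ^ 2 := by
        rw [hLK, sub_add_sub_cancel]
        gcongr
        exact L.norm_starProjection_apply_le _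
    _ = ‖u - v‖ ^ 2 + 2 * ⟪(u - v) - K.starProjection (u - v), w⟫ + ‖w‖ ^ 2 := by
        rw [norm_add_sq_real, hw]
    _ ≤ _ := by
        nlinarith [real_inner_le_norm ((u - v) - K.starProjection (u - v)) w,
          sq_nonneg (‖(u - v) - K.starProjection (u - v)‖ - ‖w‖)]

variable {H : Type*} [NormedAddCommGroup H] [NormedSpace ℝ H] (ι : H →L[ℝ] U) {ε : ℝ}

theorem two_inner_sub_starProjection_le (hε0 : 0 ≤ ε)
    (hε : ∀ h, ‖ι h - K.starProjection (ι h)‖ ≤ ε * ‖h‖) (z : U) (h : H) :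
    2 * ⟪z, ι h - K.starProjection (ι h)⟫ ≤ ε * (‖z‖ ^ 2 + ‖h‖ ^ 2) := by
  have := mul_le_mul_of_nonneg_left (hε h) (norm_nonneg z)
  nlinarith [real_inner_le_norm z (ι h - K.starProjection (ι h)),
    mul_nonneg hε0 (sq_nonneg (‖z‖ - ‖h‖))]

theorem norm_starProjection_sub_starProjection_sq_le_of_approx (hKL : K ≤ L)
    (hε : ∀ h, ‖ι h - K.starProjection (ι h)‖ ≤ ε * ‖h‖) (h₁ h₂ : H) :
    ‖L.starProjection (ι h₁) - K.starProjection (ι h₂)‖ ^ 2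
      ≤ ‖ι h₁ - ι h₂‖ ^ 2 + ε ^ 2 * (2 * ‖h₁‖ ^ 2 + 4 * ‖h₂‖ ^ 2) := by
  have hsq : ∀ h, ‖ι h - K.starProjection (ι h)‖ ^ 2 ≤ ε ^ 2 * ‖h‖ ^ 2 := fun h => by
    rw [← mul_pow]; exact pow_le_pow_left₀ (norm_nonneg _) (hε h) 2
  have := norm_starProjection_sub_starProjection_sq_le hKL (ι h₁) (ι h₂)
  rw [← map_sub] at this ⊢
  nlinarith [hsq (h₁ - h₂), hsq h₂,
    mul_le_mul_of_nonneg_left (norm_sub_sq_le_two_mul h₁ h₂) (sq_nonneg ε)]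

theorem tsum_norm_starProjection_sub_starProjection_sq_le_of_approx {I : Type*}
    (hKL : K ≤ L) (hε : ∀ h, ‖ι h - K.starProjection (ι h)‖ ≤ ε * ‖h‖) {g₁ g₂ : I → H}
    (hg₁ : Summable fun i => ‖g₁ i‖ ^ 2) (hg₂ : Summable fun i => ‖g₂ i‖ ^ 2) :
    ∑' i, ‖L.starProjection (ι (g₁ i)) - K.starProjection (ι (g₂ i))‖ ^ 2
      ≤ ∑' i, ‖ι (g₁ i) - ι (g₂ i)‖ ^ 2
        + ε ^ 2 * (2 * ∑' i, ‖g₁ i‖ ^ 2 + 4 * ∑' i, ‖g₂ i‖ ^ 2) := by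
  have hι : Summable fun i => ‖ι (g₁ i) - ι (g₂ i)‖ ^ 2 := by
    refine .of_nonneg_of_le (fun _ => sq_nonneg _) (fun i => ?_)
      ((hg₁.add hg₂).mul_left (2 * ‖ι‖ ^ 2))
    have h := pow_le_pow_left₀ (norm_nonneg _) (ι.le_opNorm (g₁ i - g₂ i)) 2
    rw [map_sub, mul_pow] at h
    nlinarith [mul_le_mul_of_nonneg_left (norm_sub_sq_le_two_mul (g₁ i) (g₂ i)) (sq_nonneg ‖ι‖)]
  have hε2 : Summable fun i => ε ^ 2 * (2 * ‖g₁ i‖ ^ 2 + 4 * ‖g₂ i‖ ^ 2) :=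
    ((hg₁.mul_left 2).add (hg₂.mul_left 4)).mul_left _
  have hterm := fun i =>
    norm_starProjection_sub_starProjection_sq_le_of_approx ι hKL hε (g₁ i) (g₂ i)
  calc ∑' i, ‖L.starProjection (ι (g₁ i)) - K.starProjection (ι (g₂ i))‖ ^ 2
      ≤ ∑' i, (‖ι (g₁ i) - ι (g₂ i)‖ ^ 2 + ε ^ 2 * (2 * ‖g₁ i‖ ^ 2 + 4 * ‖g₂ i‖ ^ 2)) :=
        Summable.tsum_le_tsum hterm
          (.of_nonneg_of_le (fun _ => sq_nonneg _) hterm (hι.add hε2)) (hι.add hε2)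
    _ = _ := by
        rw [hι.tsum_add hε2, tsum_mul_left, (hg₁.mul_left 2).tsum_add (hg₂.mul_left 4),
          tsum_mul_left, tsum_mul_left]

end NestedProjections

theorem projection_error_le {V H U I : Type*} [NormedAddCommGroup V] [NormedSpace ℝ V]
    [NormedAddCommGroup H] [NormedSpace ℝ H] [NormedAddCommGroup U] (ιVH : V →L[ℝ] H)
    {ε l p r c X Y : ℝ}
    (hX : 0 ≤ X) (hY : 0 ≤ Y) (hp : 0 ≤ p) (hpr : p ≤ r) (hc : 0 ≤ c) (hε0 : 0 ≤ ε)
    (hεl : ε ≤ l⁻¹) (hε2l : ε ^ 2 ≤ l⁻¹) {φ ψ : V} {A₁ A₂ : U} {g₁ g₂ : I → H}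
    (hA₁ : ‖A₁‖ ^ 2 + ∑' i, ‖g₁ i‖ ^ 2 ≤ c * (1 + X ^ p) * (1 + ‖φ‖ ^ 2))
    (hA₂ : ‖A₂‖ ^ 2 + ∑' i, ‖g₂ i‖ ^ 2 ≤ c * (1 + Y ^ p) * (1 + ‖ψ‖ ^ 2)) :
    ε * (‖A₂‖ ^ 2 + ‖ιVH φ‖ ^ 2) + ε ^ 2 * (2 * ∑' i, ‖g₁ i‖ ^ 2 + 4 * ∑' i, ‖g₂ i‖ ^ 2)
      ≤ (12 * c + ‖ιVH‖ ^ 2) / l * (1 + X ^ r + Y ^ r) * (1 + ‖φ‖ ^ 2 + ‖ψ‖ ^ 2) := by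
  set Kr := 1 + X ^ r + Y ^ r
  set S := 1 + ‖φ‖ ^ 2 + ‖ψ‖ ^ 2
  have hXr := Real.rpow_nonneg hX r
  have hYr := Real.rpow_nonneg hY r
  have hXp := Real.rpow_le_one_add_rpow hX hp hpr
  have hYp := Real.rpow_le_one_add_rpow hY hp hpr
  have hKr : 1 ≤ Kr := by linarith
  have hS : 1 ≤ S := by linarith [sq_nonneg ‖φ‖, sq_nonneg ‖ψ‖]
  have hG₁ : ∑' i, ‖g₁ i‖ ^ 2 ≤ 2 * c * (Kr * S) := by
    have : (1 + X ^ p) * (1 + ‖φ‖ ^ 2) ≤ 2 * Kr * S :=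
      mul_le_mul (by linarith) (by linarith [sq_nonneg ‖ψ‖]) (by positivity) (by positivity)
    nlinarith [sq_nonneg ‖A₁‖, mul_le_mul_of_nonneg_left this hc]
  have hG₂ : ‖A₂‖ ^ 2 + ∑' i, ‖g₂ i‖ ^ 2 ≤ 2 * c * (Kr * S) := by
    have : (1 + Y ^ p) * (1 + ‖ψ‖ ^ 2) ≤ 2 * Kr * S :=
      mul_le_mul (by linarith) (by linarith [sq_nonneg ‖φ‖]) (by positivity) (by positivity)
    nlinarith [mul_le_mul_of_nonneg_left this hc]
  have hφ : ‖ιVH φ‖ ^ 2 ≤ ‖ιVH‖ ^ 2 * (Kr * S) :=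
    calc ‖ιVH φ‖ ^ 2 ≤ ‖ιVH‖ ^ 2 * ‖φ‖ ^ 2 := by
          rw [← mul_pow]; exact pow_le_pow_left₀ (norm_nonneg _) (ιVH.le_opNorm φ) 2
      _ ≤ ‖ιVH‖ ^ 2 * (Kr * S) := by gcongr; nlinarith [sq_nonneg ‖ψ‖]
  have hsum₁ : 0 ≤ ∑' i, ‖g₁ i‖ ^ 2 := tsum_nonneg fun i => sq_nonneg _
  have hsum₂ : 0 ≤ ∑' i, ‖g₂ i‖ ^ 2 := tsum_nonneg fun i => sq_nonneg _
  have hl : 0 ≤ l⁻¹ := hε0.trans hεl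
  calc _ ≤ l⁻¹ * (‖A₂‖ ^ 2 + ‖ιVH φ‖ ^ 2)
        + l⁻¹ * (2 * ∑' i, ‖g₁ i‖ ^ 2 + 4 * ∑' i, ‖g₂ i‖ ^ 2) := by gcongr
    _ ≤ l⁻¹ * ((12 * c + ‖ιVH‖ ^ 2) * (Kr * S)) := by
        rw [← mul_add]; gcongr; linarith [sq_nonneg ‖A₂‖]
    _ = _ := by ring

theorem two_inner_starProjection_sub_add_tsum_le {V H U I : Type*}
    [NormedAddCommGroup V] [NormedSpace ℝ V] [NormedAddCommGroup H] [NormedSpace ℝ H]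
    [NormedAddCommGroup U] [InnerProductSpace ℝ U]
    {K L : Submodule ℝ U} [K.HasOrthogonalProjection] [L.HasOrthogonalProjection]
    (ιVH : V →L[ℝ] H) (ιHU : H →L[ℝ] U) (hKL : K ≤ L)
    {ε l : ℝ} (hε0 : 0 ≤ ε) (hε : ∀ h, ‖ιHU h - K.starProjection (ιHU h)‖ ≤ ε * ‖h‖)
    (hεl : ε ≤ l⁻¹) (hε2l : ε ^ 2 ≤ l⁻¹)
    {p q r c κ : ℝ} (hp : 0 ≤ p) (hq : 0 ≤ q) (hpr : p ≤ r) (hqr : q ≤ r) (hc : 0 ≤ c)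
    (hκ : 0 ≤ κ) {φ ψ : V} (hφ : ιHU (ιVH φ) ∈ L) (hψ : ιHU (ιVH ψ) ∈ K)
    {A₁ A₂ : U} {g₁ g₂ : I → H}
    (hg₁ : Summable fun i => ‖g₁ i‖ ^ 2) (hg₂ : Summable fun i => ‖g₂ i‖ ^ 2)
    (hA₁ : ‖A₁‖ ^ 2 + ∑' i, ‖g₁ i‖ ^ 2 ≤ c * (1 + ‖ιHU (ιVH φ)‖ ^ p) * (1 + ‖φ‖ ^ 2))
    (hA₂ : ‖A₂‖ ^ 2 + ∑' i, ‖g₂ i‖ ^ 2 ≤ c * (1 + ‖ιHU (ιVH ψ)‖ ^ p) * (1 + ‖ψ‖ ^ 2))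
    (hmono : 2 * ⟪A₁ - A₂, ιHU (ιVH φ) - ιHU (ιVH ψ)⟫
          + ∑' i, ‖ιHU (g₁ i) - ιHU (g₂ i)‖ ^ 2
        ≤ c * (1 + ‖ιHU (ιVH φ)‖ ^ p + ‖ιHU (ιVH ψ)‖ ^ q + ‖ιVH φ‖ ^ 2 + ‖ιVH ψ‖ ^ 2)
            * ‖ιHU (ιVH φ) - ιHU (ιVH ψ)‖ ^ 2
          - κ * ‖ιVH φ - ιVH ψ‖ ^ 2) :
    2 * ⟪L.starProjection A₁ - K.starProjection A₂, ιHU (ιVH φ) - ιHU (ιVH ψ)⟫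
        + ∑' i, ‖L.starProjection (ιHU (g₁ i)) - K.starProjection (ιHU (g₂ i))‖ ^ 2
      ≤ (12 * c + ‖ιVH‖ ^ 2)
            * (1 + ‖ιHU (ιVH φ)‖ ^ r + ‖ιHU (ιVH ψ)‖ ^ r + ‖ιVH φ‖ ^ 2 + ‖ιVH ψ‖ ^ 2)
            * ‖ιHU (ιVH φ) - ιHU (ιVH ψ)‖ ^ 2
        - (κ / 2) * ‖ιVH φ - ιVH ψ‖ ^ 2
        + ((12 * c + ‖ιVH‖ ^ 2) / l)
            * (1 + ‖ιHU (ιVH φ)‖ ^ r + ‖ιHU (ιVH ψ)‖ ^ r) * (1 + ‖φ‖ ^ 2 + ‖ψ‖ ^ 2) := by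
  set x := ιHU (ιVH φ)
  set y := ιHU (ιVH ψ)
  set W := 1 + ‖x‖ ^ r + ‖y‖ ^ r + ‖ιVH φ‖ ^ 2 + ‖ιVH ψ‖ ^ 2
  have hweight : c * (1 + ‖x‖ ^ p + ‖y‖ ^ q + ‖ιVH φ‖ ^ 2 + ‖ιVH ψ‖ ^ 2)
      ≤ (12 * c + ‖ιVH‖ ^ 2) * W := by
    have hW : 0 ≤ W := by positivity
    calc _ ≤ c * (3 * W) := by
          gcongr
          linarith [Real.rpow_le_one_add_rpow (norm_nonneg x) hp hpr,
            Real.rpow_le_one_add_rpow (norm_nonneg y) hq hqr, Real.rpow_nonneg (norm_nonneg x) r,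
            Real.rpow_nonneg (norm_nonneg y) r, sq_nonneg ‖ιVH φ‖, sq_nonneg ‖ιVH ψ‖]
      _ = 3 * c * W := by ring
      _ ≤ _ := by gcongr; linarith [sq_nonneg ‖ιVH‖]
  have hκ2 : 0 ≤ κ * ‖ιVH φ - ιVH ψ‖ ^ 2 := by positivity
  rw [inner_starProjection_sub_starProjection hKL hφ hψ]
  linarith [tsum_norm_starProjection_sub_starProjection_sq_le_of_approx ιHU hKL hε hg₁ hg₂,
    two_inner_sub_starProjection_le ιHU hε0 hε A₂ (ιVH φ),
    mul_le_mul_of_nonneg_right hweight (sq_nonneg ‖x - y‖),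
    projection_error_le ιVH (norm_nonneg x) (norm_nonneg y) hp hpr hc hε0 hεl hε2l hA₁ hA₂]

theorem lemma_3_11_first_general
    {V H U : Type*}
    [NormedAddCommGroup V] [InnerProductSpace ℝ V]
    [NormedAddCommGroup H] [InnerProductSpace ℝ H]
    [NormedAddCommGroup U] [InnerProductSpace ℝ U] [CompleteSpace U]
    (ιVH : V →L[ℝ] H) (ιHU : H →L[ℝ] U)
    (a : ℕ → V)
    (μ : ℕ → ℝ)
    (hproj : ∀ n : ℕ, ∀ φ : H,
      ‖ιHU φ - projIio (fun k => ιHU (ιVH (a k))) n (ιHU φ)‖ ≤ (1 / μ n) * ‖φ‖)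
    (p q : ℝ) (hp : 0 ≤ p) (hq : 0 ≤ q) (κ : ℝ) (hκ : 0 < κ)
    (c : ℝ → ℝ) (hc_nonneg : ∀ s, 0 ≤ c s)
    (hc_bdd : ∀ T > (0:ℝ), ∃ C : ℝ, ∀ s ∈ Set.Icc (0:ℝ) T, c s ≤ C)
    (𝒜 : ℝ → V → U) (𝒢 : ℕ → ℝ → V → H)
    (hyp_i : ∀ t ≥ (0:ℝ), ∀ φ : V,
      Summable (fun i => ‖𝒢 i t φ‖ ^ 2) ∧
      ‖𝒜 t φ‖ ^ 2 + ∑' i, ‖𝒢 i t φ‖ ^ 2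
        ≤ c t * (1 + ‖ιHU (ιVH φ)‖ ^ p) * (1 + ‖φ‖ ^ 2))
    (hyp_ii : ∀ t ≥ (0:ℝ), ∀ φ ψ : V,
      2 * ⟪𝒜 t φ - 𝒜 t ψ, ιHU (ιVH φ) - ιHU (ιVH ψ)⟫
          + ∑' i, ‖ιHU (𝒢 i t φ) - ιHU (𝒢 i t ψ)‖ ^ 2
        ≤ c t * (1 + ‖ιHU (ιVH φ)‖ ^ p + ‖ιHU (ιVH ψ)‖ ^ q
              + ‖ιVH φ‖ ^ 2 + ‖ιVH ψ‖ ^ 2)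
            * ‖ιHU (ιVH φ) - ιHU (ιVH ψ)‖ ^ 2
          - κ * ‖ιVH φ - ιVH ψ‖ ^ 2) :
    ∃ c' : ℝ → ℝ, (∀ s, 0 ≤ c' s) ∧
      (∀ T > (0:ℝ), ∃ C : ℝ, ∀ s ∈ Set.Icc (0:ℝ) T, c' s ≤ C) ∧
      ∀ m n : ℕ, m < n → ∀ s ≥ (0:ℝ),
      ∀ φ ∈ Submodule.span ℝ (a '' Set.Iio n), ∀ ψ ∈ Submodule.span ℝ (a '' Set.Iio m),
        2 * ⟪projIio (fun k => ιHU (ιVH (a k))) n (𝒜 s φ)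
                - projIio (fun k => ιHU (ιVH (a k))) m (𝒜 s ψ),
              ιHU (ιVH φ) - ιHU (ιVH ψ)⟫
            + ∑' i, ‖projIio (fun k => ιHU (ιVH (a k))) n (ιHU (𝒢 i s φ))
                - projIio (fun k => ιHU (ιVH (a k))) m (ιHU (𝒢 i s ψ))‖ ^ 2
          ≤ c' s * (1 + ‖ιHU (ιVH φ)‖ ^ max p (max q 2) + ‖ιHU (ιVH ψ)‖ ^ max p (max q 2)
                + ‖ιVH φ‖ ^ 2 + ‖ιVH ψ‖ ^ 2)
              * ‖ιHU (ιVH φ) - ιHU (ιVH ψ)‖ ^ 2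
            - (κ / 2) * ‖ιVH φ - ιVH ψ‖ ^ 2
            + (c' s / min (μ m) (μ m ^ 2))
              * (1 + ‖ιHU (ιVH φ)‖ ^ max p (max q 2) + ‖ιHU (ιVH ψ)‖ ^ max p (max q 2))
              * (1 + ‖φ‖ ^ 2 + ‖ψ‖ ^ 2) := by
  -- one `c'` must serve every `m`, and `μ m < 0` is compatible with `hproj` only if `H = 0`
  rcases subsingleton_or_nontrivial H with hH | hH
  · refine ⟨0, fun _ => le_rfl, fun _ _ => ⟨0, fun _ _ => le_rfl⟩, ?_⟩
    intro m n _ s _ φ _ ψ _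
    simp [Subsingleton.elim _ (0 : H)]
  have hμ : ∀ k, 0 ≤ μ k := fun k => one_div_nonneg.mp (nonneg_of_norm_le_mul _ (hproj k))
  refine ⟨fun s => 12 * c s + ‖ιVH‖ ^ 2, fun s => by linarith [hc_nonneg s, sq_nonneg ‖ιVH‖],
    fun T hT => ?_, ?_⟩
  · obtain ⟨C, hC⟩ := hc_bdd T hT
    exact ⟨12 * C + ‖ιVH‖ ^ 2, fun s hs => by linarith [hC s hs]⟩
  intro m n hmn s hs φ hφ ψ hψ
  obtain ⟨hεl, hε2l⟩ := one_div_le_inv_min_sq (hμ m)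
  have hspan : Submodule.span ℝ ((fun k => ιHU (ιVH (a k))) '' Set.Iio m)
      ≤ Submodule.span ℝ ((fun k => ιHU (ιVH (a k))) '' Set.Iio n) :=
    Submodule.span_mono (Set.image_mono (Set.Iio_subset_Iio hmn.le))
  have hmem {N : ℕ} {χ : V} (hχ : χ ∈ Submodule.span ℝ (a '' Set.Iio N)) :=
    apply_mem_span_image_of_mem_span_image (ιHU ∘L ιVH).toLinearMap hχ
  simp only [projIio_eq_starProjection] at hproj ⊢
  exact two_inner_starProjection_sub_add_tsum_le ιVH ιHU hspan (one_div_nonneg.mpr (hμ m))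
    (hproj m) hεl hε2l hp hq (le_max_left _ _) ((le_max_left _ _).trans (le_max_right _ _))
    (hc_nonneg s) hκ.le (hmem hφ) (hmem hψ) (hyp_i s hs φ).1 (hyp_i s hs ψ).1
    (hyp_i s hs φ).2 (hyp_i s hs ψ).2 (hyp_ii s hs φ ψ)

/-- First inequality of Lemma 3.11. -/
theorem lemma_3_11_first
    {V H U : Type*}
    [NormedAddCommGroup V] [InnerProductSpace ℝ V] [CompleteSpace V]
    [NormedAddCommGroup H] [InnerProductSpace ℝ H] [CompleteSpace H]
    [NormedAddCommGroup U] [InnerProductSpace ℝ U] [CompleteSpace U]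
    (ιVH : V →L[ℝ] H) (ιHU : H →L[ℝ] U)
    (hVH : Function.Injective ιVH) (hHU : Function.Injective ιHU)
    (c₀ : ℝ)
    (hc₀H : ∀ φ : H, ‖ιHU φ‖ ≤ c₀ * ‖φ‖)
    (hc₀V : ∀ φ : V, ‖ιVH φ‖ ≤ c₀ * ‖φ‖)
    (a : ℕ → V)
    (μ : ℕ → ℝ) (hμ : Tendsto μ atTop atTop)
    (hproj : ∀ n : ℕ, ∀ φ : H,
      ‖ιHU φ - projIio (fun k => ιHU (ιVH (a k))) n (ιHU φ)‖ ≤ (1 / μ n) * ‖φ‖)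
    (p q : ℝ) (hp : 0 ≤ p) (hq : 0 ≤ q) (κ : ℝ) (hκ : 0 < κ)
    (c : ℝ → ℝ) (hc_nonneg : ∀ s, 0 ≤ c s)
    (hc_bdd : ∀ T > (0:ℝ), ∃ C : ℝ, ∀ s ∈ Set.Icc (0:ℝ) T, c s ≤ C)
    (𝒜 : ℝ → V → U) (𝒢 : ℕ → ℝ → V → H)
    (hyp_i : ∀ t ≥ (0:ℝ), ∀ φ : V,
      Summable (fun i => ‖𝒢 i t φ‖ ^ 2) ∧
      ‖𝒜 t φ‖ ^ 2 + ∑' i, ‖𝒢 i t φ‖ ^ 2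
        ≤ c t * (1 + ‖ιHU (ιVH φ)‖ ^ p) * (1 + ‖φ‖ ^ 2))
    (hyp_ii : ∀ t ≥ (0:ℝ), ∀ φ ψ : V,
      2 * ⟪𝒜 t φ - 𝒜 t ψ, ιHU (ιVH φ) - ιHU (ιVH ψ)⟫
          + ∑' i, ‖ιHU (𝒢 i t φ) - ιHU (𝒢 i t ψ)‖ ^ 2
        ≤ c t * (1 + ‖ιHU (ιVH φ)‖ ^ p + ‖ιHU (ιVH ψ)‖ ^ q
              + ‖ιVH φ‖ ^ 2 + ‖ιVH ψ‖ ^ 2)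
            * ‖ιHU (ιVH φ) - ιHU (ιVH ψ)‖ ^ 2
          - κ * ‖ιVH φ - ιVH ψ‖ ^ 2)
    (hyp_iii : ∀ t ≥ (0:ℝ), ∀ φ ψ : V,
      ∑' i, ⟪ιHU (𝒢 i t φ) - ιHU (𝒢 i t ψ), ιHU (ιVH φ) - ιHU (ιVH ψ)⟫ ^ 2
        ≤ c t * (1 + ‖ιHU (ιVH φ)‖ ^ p + ‖ιHU (ιVH ψ)‖ ^ q
              + ‖ιVH φ‖ ^ 2 + ‖ιVH ψ‖ ^ 2)
            * ‖ιHU (ιVH φ) - ιHU (ιVH ψ)‖ ^ 4) :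
    ∃ c' : ℝ → ℝ, (∀ s, 0 ≤ c' s) ∧
      (∀ T > (0:ℝ), ∃ C : ℝ, ∀ s ∈ Set.Icc (0:ℝ) T, c' s ≤ C) ∧
      ∀ m n : ℕ, m < n → ∀ s ≥ (0:ℝ),
      ∀ φ ∈ Submodule.span ℝ (a '' Set.Iio n), ∀ ψ ∈ Submodule.span ℝ (a '' Set.Iio m),
        2 * ⟪projIio (fun k => ιHU (ιVH (a k))) n (𝒜 s φ)
                - projIio (fun k => ιHU (ιVH (a k))) m (𝒜 s ψ),
              ιHU (ιVH φ) - ιHU (ιVH ψ)⟫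
            + ∑' i, ‖projIio (fun k => ιHU (ιVH (a k))) n (ιHU (𝒢 i s φ))
                - projIio (fun k => ιHU (ιVH (a k))) m (ιHU (𝒢 i s ψ))‖ ^ 2
          ≤ c' s * (1 + ‖ιHU (ιVH φ)‖ ^ max p (max q 2) + ‖ιHU (ιVH ψ)‖ ^ max p (max q 2)
                + ‖ιVH φ‖ ^ 2 + ‖ιVH ψ‖ ^ 2)
              * ‖ιHU (ιVH φ) - ιHU (ιVH ψ)‖ ^ 2
            - (κ / 2) * ‖ιVH φ - ιVH ψ‖ ^ 2
            + (c' s / min (μ m) (μ m ^ 2))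
              * (1 + ‖ιHU (ιVH φ)‖ ^ max p (max q 2) + ‖ιHU (ιVH ψ)‖ ^ max p (max q 2))
              * (1 + ‖φ‖ ^ 2 + ‖ψ‖ ^ 2) :=
  lemma_3_11_first_general ιVH ιHU a μ hproj p q hp hq κ hκ c hc_nonneg hc_bdd 𝒜 𝒢 hyp_i hyp_ii
end

section
/- Suppose (f_n) is a sequence of strongly measurable functions f_n : X → V with sup_n ∫_X ‖f_n(x)‖²_V dμ(x) ≤ B < ∞, and suppose g : X → H is strongly measurable with ∫_X ‖ι(f_n(x)) − g(x)‖²_H dμ(x) → 0 as n → ∞. Then there exists a strongly measurable function f : X → V such that ι(f(x)) = g(x) for μ-a.e. x ∈ X and ∫_X ‖f(x)‖²_V dμ(x) ≤ B. (This weak-compactness identification of the limit in the smaller space is the argument used in the proofs of Theorem 3.6 and Proposition 3.20 of the paper to obtain the L²([0,T];V)-regularity and the progressive measurability in V of the limiting process, applied with X = Ω × [0,T] equipped with suitable product σ-algebras.) -/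
/-! The maps `f n` form a bounded sequence in the Hilbert space `L²(X; V)` whose images under
`T = ι ∘ ·` converge to `g` in `L²(X; H)`. A continuous linear map sends a closed ball of a Hilbert
space onto a closed set, so `g` is the image of some `F` in the ball of radius `√B`. Instead of weak
compactness this uses that nested nonempty closed convex bounded sets have a common point, namely
the limit of their minimal-norm points; here the sets are
`{v | ‖v‖ ≤ √B ∧ ‖T v - g‖ ≤ 1 / (n + 1)}`. -/

open MeasureTheory Filter Topology Metric Bornology RealInnerProductSpace

section Hilbert

variable {E : Type*} [NormedAddCommGroup E] [InnerProductSpace ℝ E] [CompleteSpace E]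

theorem exists_mem_forall_norm_sq_le_inner {K : Set E} (hne : K.Nonempty) (hclosed : IsClosed K)
    (hconv : Convex ℝ K) : ∃ v ∈ K, ∀ w ∈ K, ‖v‖ ^ 2 ≤ ⟪v, w⟫ := by
  obtain ⟨v, hvK, hv⟩ := exists_norm_eq_iInf_of_complete_convex hne hclosed.isComplete hconv 0
  refine ⟨v, hvK, fun w hw => ?_⟩
  have := (norm_eq_iInf_iff_real_inner_le_zero hconv hvK).1 hv w hw
  rw [zero_sub, inner_neg_left, inner_sub_right, real_inner_self_eq_norm_sq] at this
  linarith

/-- The minimal-norm points `w n` of `K n` have nondecreasing bounded norms, and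
`‖w m - w n‖ ^ 2 ≤ ‖w m‖ ^ 2 - ‖w n‖ ^ 2` for `n ≤ m` makes them a Cauchy sequence. -/
theorem nonempty_iInter_of_antitone_of_convex {K : ℕ → Set E} (hanti : Antitone K)
    (hne : ∀ n, (K n).Nonempty) (hclosed : ∀ n, IsClosed (K n)) (hconv : ∀ n, Convex ℝ (K n))
    (hbdd : IsBounded (K 0)) : (⋂ n, K n).Nonempty := by
  choose w hwK hw using fun n => exists_mem_forall_norm_sq_le_inner (hne n) (hclosed n) (hconv n)
  obtain ⟨C, hC⟩ := isBounded_iff_forall_norm_le.1 hbdd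
  have hdist : ∀ n m, n ≤ m → dist (w m) (w n) ^ 2 ≤ ‖w m‖ ^ 2 - ‖w n‖ ^ 2 := by
    intro n m hnm
    have := hw n (w m) (hanti hnm (hwK m))
    rw [dist_eq_norm, norm_sub_sq_real, real_inner_comm]
    linarith
  have hmono : Monotone fun n => ‖w n‖ ^ 2 := fun n m hnm =>
    sub_nonneg.1 ((sq_nonneg _).trans (hdist n m hnm))
  have hsq : CauchySeq fun n => ‖w n‖ ^ 2 :=
    (tendsto_atTop_ciSup hmono ⟨C ^ 2, Set.forall_mem_range.2 fun n =>
      pow_le_pow_left₀ (norm_nonneg _) (hC _ (hanti (Nat.zero_le n) (hwK n))) 2⟩).cauchySeq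
  have hcauchy : CauchySeq w := by
    refine Metric.cauchySeq_iff'.2 fun ε hε => ?_
    obtain ⟨N, hN⟩ := Metric.cauchySeq_iff'.1 hsq (ε ^ 2) (by positivity)
    refine ⟨N, fun n hn => (pow_lt_pow_iff_left₀ dist_nonneg hε.le two_ne_zero).1 ?_⟩
    calc dist (w n) (w N) ^ 2 ≤ ‖w n‖ ^ 2 - ‖w N‖ ^ 2 := hdist N n hn
      _ ≤ dist (‖w n‖ ^ 2) (‖w N‖ ^ 2) := le_abs_self _
      _ < ε ^ 2 := hN n hn
  obtain ⟨x, hx⟩ := cauchySeq_tendsto_of_complete hcauchy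
  exact ⟨x, Set.mem_iInter.2 fun n => (hclosed n).mem_of_tendsto hx
    (eventually_atTop.2 ⟨n, fun m hm => hanti hm (hwK m)⟩)⟩

theorem ContinuousLinearMap.isClosed_image_of_convex_of_isBounded {F : Type*}
    [NormedAddCommGroup F] [NormedSpace ℝ F] (T : E →L[ℝ] F) {K : Set E} (hclosed : IsClosed K)
    (hconv : Convex ℝ K) (hbdd : IsBounded K) : IsClosed (T '' K) := by
  refine closure_subset_iff_isClosed.1 fun y hy => ?_
  let L : ℕ → Set E := fun n => K ∩ T ⁻¹' closedBall y (1 / (n + 1))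
  obtain ⟨x, hx⟩ : (⋂ n, L n).Nonempty := by
    refine nonempty_iInter_of_antitone_of_convex (fun m n hmn => ?_) (fun n => ?_)
      (fun n => hclosed.inter (isClosed_closedBall.preimage T.continuous))
      (fun n => hconv.inter ((convex_closedBall y _).linear_preimage T.toLinearMap))
      (hbdd.subset Set.inter_subset_left)
    · exact Set.inter_subset_inter_right _ (Set.preimage_mono (closedBall_subset_closedBall
        (one_div_le_one_div_of_le (by positivity) (by exact_mod_cast Nat.add_le_add_right hmn 1))))
    · obtain ⟨_, ⟨x, hxK, rfl⟩, hxy⟩ := Metric.mem_closure_iff.1 hy (1 / (n + 1)) (by positivity)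
      exact ⟨x, hxK, mem_closedBall'.2 hxy.le⟩
  simp only [Set.mem_iInter, L, Set.mem_inter_iff, Set.mem_preimage, mem_closedBall] at hx
  refine ⟨x, (hx 0).1, eq_of_forall_dist_le fun ε hε => ?_⟩
  obtain ⟨n, hn⟩ := exists_nat_one_div_lt hε
  exact (hx n).2.trans hn.le

end Hilbert

section L2

variable {X W : Type*} [MeasurableSpace X] {μ : Measure X} [NormedAddCommGroup W]

theorem lintegral_nnnorm_sq_eq_eLpNorm_sq (h : X → W) :
    ∫⁻ x, (‖h x‖₊ : ENNReal) ^ 2 ∂μ = eLpNorm h 2 μ ^ 2 := by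
  simpa [enorm_eq_nnnorm] using (eLpNorm_nnreal_pow_eq_lintegral (f := h) (μ := μ) two_ne_zero).symm

theorem lintegral_nnnorm_sq_le_ofReal_iff (h : X → W) (B : ℝ) :
    ∫⁻ x, (‖h x‖₊ : ENNReal) ^ 2 ∂μ ≤ ENNReal.ofReal B ↔
      eLpNorm h 2 μ ≤ ENNReal.ofReal √B := by
  rw [lintegral_nnnorm_sq_eq_eLpNorm_sq,
    ← ENNReal.pow_le_pow_left_iff two_ne_zero (a := eLpNorm h 2 μ),
    ← ENNReal.ofReal_pow (Real.sqrt_nonneg B), Real.sq_sqrt', ENNReal.ofReal_max,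
    ENNReal.ofReal_zero, max_eq_left zero_le]

theorem tendsto_eLpNorm_two_of_tendsto_lintegral {ι : Type*} {l : Filter ι} {h : ι → X → W}
    (hlim : Tendsto (fun n => ∫⁻ x, (‖h n x‖₊ : ENNReal) ^ 2 ∂μ) l (𝓝 0)) :
    Tendsto (fun n => eLpNorm (h n) 2 μ) l (𝓝 0) := by
  have hpos : (0 : ℝ) < ((2 : ℕ) : ℝ)⁻¹ := by positivity
  have := (ENNReal.continuous_rpow_const (y := ((2 : ℕ) : ℝ)⁻¹).tendsto 0).comp hlim
  simpa only [Function.comp_def, lintegral_nnnorm_sq_eq_eLpNorm_sq,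
    ENNReal.pow_rpow_inv_natCast two_ne_zero, ENNReal.zero_rpow_of_pos hpos] using this

theorem memLp_of_tendsto_eLpNorm_sub {ι : Type*} {l : Filter ι} [l.NeBot] {p : ENNReal}
    {h : ι → X → W} {g : X → W} (hh : ∀ n, MemLp (h n) p μ) (hg : AEStronglyMeasurable g μ)
    (hlim : Tendsto (fun n => eLpNorm (h n - g) p μ) l (𝓝 0)) : MemLp g p μ := by
  obtain ⟨n, hn⟩ := (hlim.eventually (gt_mem_nhds ENNReal.zero_lt_top)).exists
  simpa using (hh n).sub ⟨(hh n).1.sub hg, hn⟩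

end L2

theorem weak_limit_in_smaller_space_general
    {X : Type*} [MeasurableSpace X] (μ : Measure X)
    {V H : Type*}
    [NormedAddCommGroup V] [InnerProductSpace ℝ V] [CompleteSpace V]
    [NormedAddCommGroup H] [InnerProductSpace ℝ H]
    (ι : V →L[ℝ] H)
    (f : ℕ → X → V) (hf : ∀ n, StronglyMeasurable (f n))
    (B : ℝ)
    (hB : ∀ n, ∫⁻ x, (‖f n x‖₊ : ENNReal) ^ 2 ∂μ ≤ ENNReal.ofReal B)
    (g : X → H) (hg : StronglyMeasurable g)
    (hconv : Tendsto (fun n => ∫⁻ x, (‖ι (f n x) - g x‖₊ : ENNReal) ^ 2 ∂μ)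
      atTop (𝓝 0)) :
    ∃ F : X → V, StronglyMeasurable F ∧ (∀ᵐ x ∂μ, ι (F x) = g x) ∧
      ∫⁻ x, (‖F x‖₊ : ENNReal) ^ 2 ∂μ ≤ ENNReal.ofReal B := by
  have hfB n := (lintegral_nnnorm_sq_le_ofReal_iff (f n) B).1 (hB n)
  have hfL2 n : MemLp (f n) 2 μ :=
    ⟨(hf n).aestronglyMeasurable, (hfB n).trans_lt ENNReal.ofReal_lt_top⟩
  have hfBall n : (hfL2 n).toLp (f n) ∈ closedBall 0 √B := by
    rw [mem_closedBall_zero_iff, Lp.norm_toLp]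
    exact ENNReal.toReal_le_of_le_ofReal (Real.sqrt_nonneg B) (hfB n)
  have hdiff := tendsto_eLpNorm_two_of_tendsto_lintegral hconv
  have hgL2 : MemLp g 2 μ :=
    memLp_of_tendsto_eLpNorm_sub (fun n => ι.comp_memLp' (hfL2 n)) hg.aestronglyMeasurable hdiff
  have hT : Tendsto (fun n => ι.compLpL 2 μ ((hfL2 n).toLp (f n))) atTop (𝓝 (hgL2.toLp g)) := by
    refine (Lp.tendsto_Lp_iff_tendsto_eLpNorm _ _ _).2 (hdiff.congr fun n => eLpNorm_congr_ae ?_)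
    filter_upwards [ι.coeFn_compLpL ((hfL2 n).toLp (f n)), (hfL2 n).coeFn_toLp] with x h1 h2
    rw [Pi.sub_apply, h1, h2]
  obtain ⟨v, hv, hTv⟩ : hgL2.toLp g ∈ ι.compLpL 2 μ '' closedBall 0 √B :=
    ((ι.compLpL 2 μ).isClosed_image_of_convex_of_isBounded isClosed_closedBall
      (convex_closedBall 0 _) isBounded_closedBall).mem_of_tendsto hT
      (Eventually.of_forall fun n => Set.mem_image_of_mem _ (hfBall n))
  have hvm := Lp.aestronglyMeasurable v
  refine ⟨hvm.mk v, hvm.stronglyMeasurable_mk, ?_, ?_⟩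
  · filter_upwards [hvm.ae_eq_mk, ι.coeFn_compLpL v, hgL2.coeFn_toLp] with x h1 h2 h3
    rw [← h1, ← h2, ← h3, ← hTv]
  · rw [lintegral_nnnorm_sq_le_ofReal_iff, eLpNorm_congr_ae hvm.ae_eq_mk.symm, ← Lp.enorm_def,
      ← ofReal_norm]
    exact ENNReal.ofReal_le_ofReal (mem_closedBall_zero_iff.1 hv)

/-- Weak-compactness identification of a limit in the smaller space: if `(f n)` is a
sequence of strongly measurable `V`-valued functions with uniformly bounded `L²` norms,
and `ι ∘ f n → g` in `L²(X; H)` through the continuous embedding `ι : V → H`, then `g`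
admits a strongly measurable `V`-valued representative `F` respecting the same `L²` bound. -/
theorem weak_limit_in_smaller_space
    {X : Type*} [MeasurableSpace X] (μ : Measure X) [SigmaFinite μ]
    {V H : Type*}
    [NormedAddCommGroup V] [InnerProductSpace ℝ V] [CompleteSpace V]
    [TopologicalSpace.SeparableSpace V]
    [NormedAddCommGroup H] [InnerProductSpace ℝ H] [CompleteSpace H]
    [TopologicalSpace.SeparableSpace H]
    (ι : V →L[ℝ] H) (hι : Function.Injective ι)
    (f : ℕ → X → V) (hf : ∀ n, StronglyMeasurable (f n))
    (B : ℝ)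
    (hB : ∀ n, ∫⁻ x, (‖f n x‖₊ : ENNReal) ^ 2 ∂μ ≤ ENNReal.ofReal B)
    (g : X → H) (hg : StronglyMeasurable g)
    (hconv : Tendsto (fun n => ∫⁻ x, (‖ι (f n x) - g x‖₊ : ENNReal) ^ 2 ∂μ)
      atTop (𝓝 0)) :
    ∃ F : X → V, StronglyMeasurable F ∧ (∀ᵐ x ∂μ, ι (F x) = g x) ∧
      ∫⁻ x, (‖F x‖₊ : ENNReal) ^ 2 ∂μ ≤ ENNReal.ofReal B :=
  weak_limit_in_smaller_space_general μ ι f hf B hB g hg hconv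
end
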